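/- arXiv:0904.2060 — 2 statements merged into one kernel-verified Lean document; each statement's English description precedes it below -/
import Mathlib

section
/- In a 2-dimensional C-WMMG with A_1(N) ∩ A_2(N) = ∅, for every p_i ∈ M: WC1_i = ∅ if and only if it is not the case that C_{1i} is winning and p_i ∈ A_2(C_{1i}); and if WC1_i ≠ ∅, then WC1_i = {C_{1i} ∪ E : E ⊆ E_{1i}}. -/
/-- Competitive power of a coalition in a 2-dimensional C-WMMG with weights `w1, w2`. -/
def q {P : Type*} [DecidableEq P] (w1 w2 : P → ℕ) (C : Finset P) : ℕ :=
  C.sup w1 + C.sup w2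

/-- A coalition is winning iff its power exceeds that of its complement. -/
def Winning {P : Type*} [Fintype P] [DecidableEq P] (w1 w2 : P → ℕ) (C : Finset P) : Prop :=
  q w1 w2 Cᶜ < q w1 w2 C

/-- A minimal winning coalition: winning, and every proper subset is losing. -/
def MWC {P : Type*} [Fintype P] [DecidableEq P] (w1 w2 : P → ℕ) (C : Finset P) : Prop :=
  Winning w1 w2 C ∧ ∀ D ⊂ C, ¬ Winning w1 w2 D

/-- `Aset w C` is the set of members of `C` whose `w`-weight attains the maximum over `C`. -/
def Aset {P : Type*} [DecidableEq P] (w : P → ℕ) (C : Finset P) : Finset P :=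
  C.filter (fun j => w j = C.sup w)

/-- `B C = A_1(C) ∪ A_2(C)`: the busy players of `C`. -/
def Bset {P : Type*} [DecidableEq P] (w1 w2 : P → ℕ) (C : Finset P) : Finset P :=
  Aset w1 C ∪ Aset w2 C

/-- `M = N ∖ B(N)`: the players idle in the grand coalition. -/
def Mset {P : Type*} [Fintype P] [DecidableEq P] (w1 w2 : P → ℕ) : Finset P :=
  Finset.univ \ Bset w1 w2 Finset.univ

/-- `D_{1i} = {p_t ∈ M : p_t^1 + q_2(N) ≥ p_i^2 + q_1(N)}`. -/
def D1 {P : Type*} [Fintype P] [DecidableEq P] (w1 w2 : P → ℕ) (i : P) : Finset P :=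
  (Mset w1 w2).filter
    (fun t => w2 i + (Finset.univ : Finset P).sup w1 ≤ w1 t + (Finset.univ : Finset P).sup w2)

/-- `C_{1i} = A_1(N) ∪ {p_i} ∪ D_{1i}`. -/
def C1 {P : Type*} [Fintype P] [DecidableEq P] (w1 w2 : P → ℕ) (i : P) : Finset P :=
  insert i (Aset w1 Finset.univ ∪ D1 w1 w2 i)

/-- A player `j` is swing in a coalition `C` if `j ∈ C` and `C ∖ {j}` is losing. -/
def Swing {P : Type*} [Fintype P] [DecidableEq P] (w1 w2 : P → ℕ) (j : P) (C : Finset P) : Prop :=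
  j ∈ C ∧ ¬ Winning w1 w2 (C.erase j)

/-- `E_{1i} = {p_j ∈ M ∖ C_{1i} : p_j^2 ≤ p_i^2}`. -/
def E1 {P : Type*} [Fintype P] [DecidableEq P] (w1 w2 : P → ℕ) (i : P) : Finset P :=
  (Mset w1 w2 \ C1 w1 w2 i).filter (fun j => w2 j ≤ w2 i)

/-- `WC1_i = {C ⊆ N : C winning, A_1(C) = A_1(N), p_i ∈ A_2(C)}`. -/
def WC1 {P : Type*} [Fintype P] [DecidableEq P] (w1 w2 : P → ℕ) (i : P) :
    Set (Finset P) :=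
  {C | Winning w1 w2 C ∧ Aset w1 C = Aset w1 Finset.univ ∧ i ∈ Aset w2 C}


section Aux
variable {P : Type*} [Fintype P] [DecidableEq P]

lemma mem_Aset {w : P → ℕ} {C : Finset P} {j : P} :
    j ∈ Aset w C ↔ j ∈ C ∧ w j = C.sup w := Finset.mem_filter

lemma mem_Mset {w1 w2 : P → ℕ} {j : P} :
    j ∈ Mset w1 w2 ↔ w1 j ≠ Finset.univ.sup w1 ∧ w2 j ≠ Finset.univ.sup w2 := by
  simp [Mset, Bset, Aset, not_or]

lemma sup_eq_of_Aset_subset [Nonempty P] (w : P → ℕ) {D : Finset P}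
    (h : Aset w Finset.univ ⊆ D) : D.sup w = Finset.univ.sup w := by
  obtain ⟨a, -, ha⟩ := Finset.exists_mem_eq_sup Finset.univ Finset.univ_nonempty w
  refine le_antisymm (Finset.sup_mono (Finset.subset_univ D)) ?_
  calc Finset.univ.sup w = w a := ha
    _ ≤ D.sup w := Finset.le_sup (h (mem_Aset.2 ⟨Finset.mem_univ a, ha.symm⟩))

lemma Aset_eq_of_subset [Nonempty P] (w : P → ℕ) {C : Finset P}
    (h : Aset w Finset.univ ⊆ C) : Aset w C = Aset w Finset.univ := by
  ext j
  rw [mem_Aset, mem_Aset, sup_eq_of_Aset_subset w h]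
  exact ⟨fun ⟨_, hj⟩ => ⟨Finset.mem_univ j, hj⟩,
    fun ⟨_, hj⟩ => ⟨h (mem_Aset.2 ⟨Finset.mem_univ j, hj⟩), hj⟩⟩

end Aux

/-- In a 2-dim C-WMMG with `A_1(N) ∩ A_2(N) = ∅` and `p_i ∈ M`: `WC1_i = ∅` iff it is
not the case that `C_{1i}` is winning with `p_i ∈ A_2(C_{1i})`; and if `WC1_i ≠ ∅`,
then `WC1_i = {C_{1i} ∪ E : E ⊆ E_{1i}}`. -/
theorem wc1_characterization {P : Type*} [Fintype P] [DecidableEq P]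
    (w1 w2 : P → ℕ)
    (hdisj : Aset w1 Finset.univ ∩ Aset w2 Finset.univ = ∅)
    (i : P) (hi : i ∈ Mset w1 w2) :
    (WC1 w1 w2 i = ∅ ↔
      ¬ (Winning w1 w2 (C1 w1 w2 i) ∧ i ∈ Aset w2 (C1 w1 w2 i))) ∧
    (WC1 w1 w2 i ≠ ∅ →
      WC1 w1 w2 i = {C : Finset P | ∃ E ⊆ E1 w1 w2 i, C = C1 w1 w2 i ∪ E}) := by
  haveI : Nonempty P := ⟨i⟩
  have hq : ∀ C : Finset P, q w1 w2 C = C.sup w1 + C.sup w2 := fun _ => rfl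
  obtain ⟨hi1, hi2⟩ := mem_Mset.1 hi
  have hi1' : w1 i < Finset.univ.sup w1 :=
    lt_of_le_of_ne (Finset.le_sup (Finset.mem_univ i)) hi1
  have hi2' : w2 i < Finset.univ.sup w2 :=
    lt_of_le_of_ne (Finset.le_sup (Finset.mem_univ i)) hi2
  have hiC1 : i ∈ C1 w1 w2 i := Finset.mem_insert_self _ _
  have hA1C1 : Aset w1 Finset.univ ⊆ C1 w1 w2 i := fun j hj =>
    Finset.mem_insert_of_mem (Finset.mem_union_left _ hj)
  have hD1C1 : D1 w1 w2 i ⊆ C1 w1 w2 i := fun j hj =>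
    Finset.mem_insert_of_mem (Finset.mem_union_right _ hj)
  have hA2C1 : ∀ j ∈ Aset w2 Finset.univ, j ∉ C1 w1 w2 i := by
    intro j hj hjC1
    rcases Finset.mem_insert.1 hjC1 with rfl | hjC1
    · exact hi2 (mem_Aset.1 hj).2
    rcases Finset.mem_union.1 hjC1 with h | h
    · exact Finset.notMem_empty j (hdisj ▸ Finset.mem_inter.2 ⟨h, hj⟩)
    · exact ((mem_Mset.1 (Finset.mem_of_mem_filter j h)).2) (mem_Aset.1 hj).2
  have Hmain : ∀ C ∈ WC1 w1 w2 i,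
      C1 w1 w2 i ⊆ C ∧ (C \ C1 w1 w2 i) ⊆ E1 w1 w2 i ∧
      Winning w1 w2 (C1 w1 w2 i) ∧ i ∈ Aset w2 (C1 w1 w2 i) := by
    intro C hC
    obtain ⟨hw, hA, hiA2⟩ := hC
    have hw' : q w1 w2 Cᶜ < q w1 w2 C := hw
    have hA1C : Aset w1 Finset.univ ⊆ C := hA ▸ Finset.filter_subset _ _
    have hiC : i ∈ C := (mem_Aset.1 hiA2).1
    have hsup2C : C.sup w2 = w2 i := ((mem_Aset.1 hiA2).2).symm
    have hsup1C : C.sup w1 = Finset.univ.sup w1 := sup_eq_of_Aset_subset w1 hA1C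
    have hqC : q w1 w2 C = Finset.univ.sup w1 + w2 i := by rw [hq, hsup1C, hsup2C]
    have hA2Cc : Aset w2 Finset.univ ⊆ Cᶜ := by
      intro j hj
      rw [Finset.mem_compl]
      intro hjC
      have h1 : w2 j ≤ C.sup w2 := Finset.le_sup hjC
      rw [hsup2C, (mem_Aset.1 hj).2] at h1
      exact absurd h1 (not_le.2 hi2')
    have hsup2Cc : Cᶜ.sup w2 = Finset.univ.sup w2 := sup_eq_of_Aset_subset w2 hA2Cc
    have hC1C : C1 w1 w2 i ⊆ C := by
      intro j hj
      rcases Finset.mem_insert.1 hj with rfl | hj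
      · exact hiC
      rcases Finset.mem_union.1 hj with h | h
      · exact hA1C h
      · by_contra hjC
        have hjCc : j ∈ Cᶜ := Finset.mem_compl.2 hjC
        have hD : w2 i + Finset.univ.sup w1 ≤ w1 j + Finset.univ.sup w2 :=
          (Finset.mem_filter.1 h).2
        have hle : q w1 w2 C ≤ q w1 w2 Cᶜ := by
          rw [hqC, hq, hsup2Cc]
          have h2 : w1 j ≤ Cᶜ.sup w1 := Finset.le_sup hjCc
          omega
        exact absurd hw' (not_lt.2 hle)
    have hsdiff : C \ C1 w1 w2 i ⊆ E1 w1 w2 i := by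
      intro j hj
      obtain ⟨hjC, hjn⟩ := Finset.mem_sdiff.1 hj
      have hw2j : w2 j ≤ w2 i := by rw [← hsup2C]; exact Finset.le_sup hjC
      have hjM : j ∈ Mset w1 w2 := by
        rw [mem_Mset]
        constructor
        · intro h
          exact hjn (hA1C1 (mem_Aset.2 ⟨Finset.mem_univ j, h⟩))
        · intro h
          rw [h] at hw2j
          exact absurd hw2j (not_le.2 hi2')
      exact Finset.mem_filter.2 ⟨Finset.mem_sdiff.2 ⟨hjM, hjn⟩, hw2j⟩
    have hsup2C1 : (C1 w1 w2 i).sup w2 = w2 i := by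
      refine le_antisymm (Finset.sup_le fun j hj => ?_) (Finset.le_sup hiC1)
      rw [← hsup2C]; exact Finset.le_sup (hC1C hj)
    have hiA2C1 : i ∈ Aset w2 (C1 w1 w2 i) := mem_Aset.2 ⟨hiC1, hsup2C1.symm⟩
    have hsup1C1 : (C1 w1 w2 i).sup w1 = Finset.univ.sup w1 :=
      sup_eq_of_Aset_subset w1 hA1C1
    have hA2C1c : Aset w2 Finset.univ ⊆ (C1 w1 w2 i)ᶜ := fun j hj =>
      Finset.mem_compl.2 (hA2C1 j hj)
    have hsup2C1c : (C1 w1 w2 i)ᶜ.sup w2 = Finset.univ.sup w2 :=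
      sup_eq_of_Aset_subset w2 hA2C1c
    have hq2lt : Finset.univ.sup w2 < Finset.univ.sup w1 + w2 i := by
      have h3 := hw'
      rw [hqC, hq, hsup2Cc] at h3
      omega
    have hwinC1 : Winning w1 w2 (C1 w1 w2 i) := by
      show q w1 w2 (C1 w1 w2 i)ᶜ < q w1 w2 (C1 w1 w2 i)
      have hqC1 : q w1 w2 (C1 w1 w2 i) = Finset.univ.sup w1 + w2 i := by
        rw [hq, hsup1C1, hsup2C1]
      rw [hqC1, hq, hsup2C1c]
      rcases Finset.eq_empty_or_nonempty ((C1 w1 w2 i)ᶜ) with he | hne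
      · rw [he]; simpa using hq2lt
      obtain ⟨a, haCc, hasup⟩ := Finset.exists_mem_eq_sup _ hne w1
      rw [hasup]
      by_cases haC : a ∈ C
      · have haE : a ∈ C \ C1 w1 w2 i :=
          Finset.mem_sdiff.2 ⟨haC, Finset.mem_compl.1 haCc⟩
        have haM : a ∈ Mset w1 w2 :=
          (Finset.mem_sdiff.1 (Finset.mem_filter.1 (hsdiff haE)).1).1
        have haD : a ∉ D1 w1 w2 i := fun h => (Finset.mem_compl.1 haCc) (hD1C1 h)
        have hnle : ¬ (w2 i + Finset.univ.sup w1 ≤ w1 a + Finset.univ.sup w2) := by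
          intro h
          exact haD (Finset.mem_filter.2 ⟨haM, h⟩)
        omega
      · have haCc' : a ∈ Cᶜ := Finset.mem_compl.2 haC
        have h1 : w1 a ≤ Cᶜ.sup w1 := Finset.le_sup haCc'
        have h2 := hw'
        rw [hqC, hq, hsup2Cc] at h2
        omega
    exact ⟨hC1C, hsdiff, hwinC1, hiA2C1⟩
  have Hbuild : Winning w1 w2 (C1 w1 w2 i) → i ∈ Aset w2 (C1 w1 w2 i) →
      ∀ E ⊆ E1 w1 w2 i, (C1 w1 w2 i ∪ E) ∈ WC1 w1 w2 i := by
    intro hwin hiA2 E hE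
    have hsub : C1 w1 w2 i ⊆ C1 w1 w2 i ∪ E := Finset.subset_union_left
    have hA1C : Aset w1 Finset.univ ⊆ C1 w1 w2 i ∪ E := hA1C1.trans hsub
    have hsup2C1 : (C1 w1 w2 i).sup w2 = w2 i := ((mem_Aset.1 hiA2).2).symm
    have hsup2 : (C1 w1 w2 i ∪ E).sup w2 = w2 i := by
      refine le_antisymm (Finset.sup_le fun j hj => ?_) (Finset.le_sup (hsub hiC1))
      rcases Finset.mem_union.1 hj with h | h
      · calc w2 j ≤ (C1 w1 w2 i).sup w2 := Finset.le_sup h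
          _ = w2 i := hsup2C1
      · exact (Finset.mem_filter.1 (hE h)).2
    have hsup1 : (C1 w1 w2 i ∪ E).sup w1 = Finset.univ.sup w1 :=
      sup_eq_of_Aset_subset w1 hA1C
    refine ⟨?_, Aset_eq_of_subset w1 hA1C, mem_Aset.2 ⟨hsub hiC1, hsup2.symm⟩⟩
    show q w1 w2 (C1 w1 w2 i ∪ E)ᶜ < q w1 w2 (C1 w1 w2 i ∪ E)
    have hwin' : q w1 w2 (C1 w1 w2 i)ᶜ < q w1 w2 (C1 w1 w2 i) := hwin
    have hcsub : (C1 w1 w2 i ∪ E)ᶜ ⊆ (C1 w1 w2 i)ᶜ := fun j hj =>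
      Finset.mem_compl.2 fun h => Finset.mem_compl.1 hj (hsub h)
    have h1 : q w1 w2 (C1 w1 w2 i ∪ E)ᶜ ≤ q w1 w2 (C1 w1 w2 i)ᶜ := by
      rw [hq, hq]
      exact Nat.add_le_add (Finset.sup_mono hcsub) (Finset.sup_mono hcsub)
    have h2 : q w1 w2 (C1 w1 w2 i ∪ E) = q w1 w2 (C1 w1 w2 i) := by
      rw [hq, hq, hsup1, hsup2, sup_eq_of_Aset_subset w1 hA1C1, hsup2C1]
    omega
  constructor
  · constructor
    · intro hempty
      rintro ⟨hwin, hiA2⟩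
      have hmem := Hbuild hwin hiA2 ∅ (Finset.empty_subset _)
      rw [Finset.union_empty] at hmem
      exact Set.eq_empty_iff_forall_notMem.1 hempty _ hmem
    · intro hnot
      rw [Set.eq_empty_iff_forall_notMem]
      intro C hC
      obtain ⟨-, -, h3, h4⟩ := Hmain C hC
      exact hnot ⟨h3, h4⟩
  · intro hne
    obtain ⟨C0, hC0⟩ := Set.nonempty_iff_ne_empty.2 hne
    obtain ⟨-, -, hwin, hiA2⟩ := Hmain C0 hC0
    ext C
    simp only [Set.mem_setOf_eq]
    constructor
    · intro hC
      obtain ⟨hsub, hsd, -, -⟩ := Hmain C hC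
      exact ⟨C \ C1 w1 w2 i, hsd, (Finset.union_sdiff_of_subset hsub).symm⟩
    · rintro ⟨E, hE, rfl⟩
      exact Hbuild hwin hiA2 E hE
end

section
/- In a 2-dimensional C-WMMG, if players p_i and p_j satisfy p_i^1 ≤ p_j^1 and p_i^2 ≤ p_j^2, then hp_i ≤ hp_j and dp_i ≤ dp_j. In particular, if p_i^1 = p_j^1 and p_i^2 = p_j^2, then hp_i = hp_j and dp_i = dp_j. -/
open scoped Classical in
/-- The finset of minimal winning coalitions containing player `j`. -/
noncomputable def mwcsOf {P : Type*} [Fintype P] [DecidableEq P] (w1 w2 : P → ℕ) (j : P) :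
    Finset (Finset P) :=
  Finset.univ.filter (fun C => MWC w1 w2 C ∧ j ∈ C)

/-- The Holler-Packel index `hp_j = |MWC_j|`. -/
noncomputable def hp {P : Type*} [Fintype P] [DecidableEq P] (w1 w2 : P → ℕ) (j : P) : ℕ :=
  (mwcsOf w1 w2 j).card

/-- The Deegan-Packel index `dp_j = ∑_{C ∈ MWC_j} 1/|C|`. -/
noncomputable def dp {P : Type*} [Fintype P] [DecidableEq P] (w1 w2 : P → ℕ) (j : P) : ℚ :=
  ∑ C ∈ mwcsOf w1 w2 j, (1 : ℚ) / C.card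

/-!
Replacing `i` by the stronger player `j` in a winning coalition avoiding `j` keeps it winning. So
sending `C ∈ MWC_i` to itself when `j ∈ C`, and otherwise to a minimal winning subcoalition of
`(C \ {i}) ∪ {j}`, gives a size-non-increasing map `MWC_i → MWC_j`; both inequalities follow once
it is injective.

Injectivity comes down to: for distinct `C₁, C₂ ∈ MWC_i` avoiding `j`, the coalition
`((C₁ ∩ C₂) \ {i}) ∪ {j}` is losing. Since `j` lies in the complement of `C₁`, moving `i` there does
not change its power, so minimality forces `i` to be the strict maximum of `C₁` in some coordinate,
and likewise for `C₂`. If this is the same coordinate for both, `C₁ ∩ C₂` is already winning,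
against minimality; if the coordinates differ, the winning conditions of `C₁`, `C₂` and of the
swapped intersection cannot hold together.
-/

theorem Finset.sum_le_sum_of_injOn {α β R : Type*} [AddCommMonoid R] [PartialOrder R]
    [IsOrderedAddMonoid R] {s : Finset α} {t : Finset β} (e : α → β) (he : Set.MapsTo e s t)
    (he_inj : Set.InjOn e s) {f : α → R} {g : β → R} (hg : ∀ y ∈ t, 0 ≤ g y)
    (hfg : ∀ x ∈ s, f x ≤ g (e x)) : ∑ x ∈ s, f x ≤ ∑ y ∈ t, g y := by
  classical
  calc ∑ x ∈ s, f x ≤ ∑ x ∈ s, g (e x) := Finset.sum_le_sum hfg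
    _ = ∑ y ∈ s.image e, g y := (Finset.sum_image he_inj).symm
    _ ≤ ∑ y ∈ t, g y :=
      Finset.sum_le_sum_of_subset_of_nonneg (Finset.image_subset_iff.2 he) fun y hy _ => hg y hy

namespace Finset

variable {α β : Type*} [DecidableEq α] [SemilatticeSup β] [OrderBot β] {w : α → β}

theorem sup_eq_of_sup_erase_lt {s : Finset α} {i : α} (hi : i ∈ s) (h : (s.erase i).sup w < w i) :
    s.sup w = w i := by
  rw [← insert_erase hi, sup_insert]
  exact sup_eq_left.2 h.le

variable [Fintype α]

theorem sup_compl_le_sup_compl {C₁ C₂ : Finset α} {i j : α} (hi : i ∈ C₁) (hj : j ∉ C₂)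
    (h : (C₂.erase i).sup w ≤ w j) : C₁ᶜ.sup w ≤ C₂ᶜ.sup w := by
  have hsub : C₁ᶜ ⊆ C₂ᶜ ∪ C₂.erase i := fun x hx => by
    have hxi : x ≠ i := fun hxi => mem_compl.1 hx (hxi ▸ hi)
    by_cases hx₂ : x ∈ C₂ <;> simp [hx₂, hxi]
  calc C₁ᶜ.sup w ≤ (C₂ᶜ ∪ C₂.erase i).sup w := sup_mono hsub
    _ = C₂ᶜ.sup w := by rw [sup_union, sup_eq_left.2 (h.trans (le_sup (mem_compl.2 hj)))]

theorem sup_le_sup_inter_sup_compl (C₁ C₂ : Finset α) :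
    C₁.sup w ≤ (C₁ ∩ C₂).sup w ⊔ C₂ᶜ.sup w := by
  rw [← sup_union]
  exact sup_mono fun x hx => by by_cases hx₂ : x ∈ C₂ <;> simp [hx, hx₂]

end Finset

section Power

variable {P : Type*} [DecidableEq P] {w1 w2 : P → ℕ}

theorem q_comm (C : Finset P) : q w2 w1 C = q w1 w2 C := add_comm _ _

theorem q_mono {C D : Finset P} (h : C ⊆ D) : q w1 w2 C ≤ q w1 w2 D :=
  add_le_add (Finset.sup_mono h) (Finset.sup_mono h)

theorem q_insert_le_q_insert {i j : P} (hw1 : w1 i ≤ w1 j) (hw2 : w2 i ≤ w2 j) (X : Finset P) :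
    q w1 w2 (insert i X) ≤ q w1 w2 (insert j X) := by
  simp only [q, Finset.sup_insert]
  exact add_le_add (sup_le_sup_right hw1 _) (sup_le_sup_right hw2 _)

theorem q_insert_of_mem {i j : P} {X : Finset P} (hw1 : w1 i ≤ w1 j) (hw2 : w2 i ≤ w2 j)
    (hj : j ∈ X) : q w1 w2 (insert i X) = q w1 w2 X := by
  simp only [q, Finset.sup_insert]
  rw [max_eq_right (hw1.trans (Finset.le_sup hj)), max_eq_right (hw2.trans (Finset.le_sup hj))]

end Power

section Game

variable {P : Type*} [Fintype P] [DecidableEq P] {w1 w2 : P → ℕ}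

theorem winning_comm {C : Finset P} : Winning w2 w1 C ↔ Winning w1 w2 C := by
  simp only [Winning, q_comm]

theorem Winning.mono {C D : Finset P} (h : C ⊆ D) (hC : Winning w1 w2 C) : Winning w1 w2 D :=
  (q_mono (Finset.compl_subset_compl.2 h)).trans_lt (hC.trans_le (q_mono h))

theorem Winning.exists_mwc_subset {C : Finset P} (hC : Winning w1 w2 C) :
    ∃ D ⊆ C, MWC w1 w2 D := by
  induction C using Finset.strongInduction with
  | H C ih =>
    by_cases hmin : ∃ D ⊂ C, Winning w1 w2 D
    · obtain ⟨D, hDC, hD⟩ := hmin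
      obtain ⟨E, hED, hE⟩ := ih D hDC hD
      exact ⟨E, hED.trans hDC.subset, hE⟩
    · exact ⟨C, subset_rfl, hC, fun D hDC hD => hmin ⟨D, hDC, hD⟩⟩

theorem Winning.swap {C : Finset P} {i j : P} (hC : Winning w1 w2 C) (hi : i ∈ C) (hj : j ∉ C)
    (hw1 : w1 i ≤ w1 j) (hw2 : w2 i ≤ w2 j) : Winning w1 w2 (insert j (C.erase i)) := by
  have hij : i ≠ j := ne_of_mem_of_not_mem hi hj
  have hcompl : (insert j (C.erase i))ᶜ = insert i (Cᶜ.erase j) := by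
    rw [Finset.compl_insert, Finset.compl_erase, Finset.erase_insert_of_ne hij]
  unfold Winning at hC ⊢
  rw [hcompl]
  calc q w1 w2 (insert i (Cᶜ.erase j))
      ≤ q w1 w2 (insert j (Cᶜ.erase j)) := q_insert_le_q_insert hw1 hw2 _
    _ = q w1 w2 Cᶜ := by rw [Finset.insert_erase (Finset.mem_compl.2 hj)]
    _ < q w1 w2 C := hC
    _ = q w1 w2 (insert i (C.erase i)) := by rw [Finset.insert_erase hi]
    _ ≤ q w1 w2 (insert j (C.erase i)) := q_insert_le_q_insert hw1 hw2 _

theorem MWC.sup_erase_lt {C : Finset P} {i j : P} (hC : MWC w1 w2 C) (hi : i ∈ C) (hj : j ∉ C)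
    (hw1 : w1 i ≤ w1 j) (hw2 : w2 i ≤ w2 j) :
    (C.erase i).sup w1 < w1 i ∨ (C.erase i).sup w2 < w2 i := by
  have hlose : q w1 w2 (C.erase i) ≤ q w1 w2 (C.erase i)ᶜ :=
    not_lt.1 (hC.2 _ (Finset.erase_ssubset hi))
  rw [Finset.compl_erase, q_insert_of_mem hw1 hw2 (Finset.mem_compl.2 hj)] at hlose
  have hq : q w1 w2 C = max (w1 i) ((C.erase i).sup w1) + max (w2 i) ((C.erase i).sup w2) := by
    conv_lhs => rw [← Finset.insert_erase hi]
    simp only [q, Finset.sup_insert]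
  have hwin : q w1 w2 Cᶜ < q w1 w2 C := hC.1
  unfold q at hlose hwin hq
  omega

theorem Winning.inter_of_sup_erase_lt {C₁ C₂ : Finset P} {i j : P} (hC₁ : Winning w1 w2 C₁)
    (hC₂ : Winning w1 w2 C₂) (hi₁ : i ∈ C₁) (hi₂ : i ∈ C₂) (hj₁ : j ∉ C₁) (hj₂ : j ∉ C₂)
    (hw1 : w1 i ≤ w1 j) (h₁ : (C₁.erase i).sup w1 < w1 i) (h₂ : (C₂.erase i).sup w1 < w1 i) :
    Winning w1 w2 (C₁ ∩ C₂) := by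
  have hK : (C₁ ∩ C₂).sup w1 = w1 i :=
    Finset.sup_eq_of_sup_erase_lt (Finset.mem_inter.2 ⟨hi₁, hi₂⟩)
      ((Finset.sup_mono (Finset.erase_subset_erase i Finset.inter_subset_left)).trans_lt h₁)
  have hA₁ := Finset.sup_eq_of_sup_erase_lt hi₁ h₁
  have hA₂ := Finset.sup_eq_of_sup_erase_lt hi₂ h₂
  have hAc : C₁ᶜ.sup w1 = C₂ᶜ.sup w1 :=
    le_antisymm (Finset.sup_compl_le_sup_compl hi₁ hj₂ (h₂.le.trans hw1))
      (Finset.sup_compl_le_sup_compl hi₂ hj₁ (h₁.le.trans hw1))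
  have hj : w1 j ≤ C₁ᶜ.sup w1 := Finset.le_sup (Finset.mem_compl.2 hj₁)
  have hB₁ := Finset.sup_le_sup_inter_sup_compl (w := w2) C₁ C₂
  have hB₂ := Finset.sup_le_sup_inter_sup_compl (w := w2) C₂ C₁
  rw [Finset.inter_comm] at hB₂
  unfold Winning q at hC₁ hC₂ ⊢
  rw [Finset.compl_inter, Finset.sup_union, Finset.sup_union, hK]
  rw [hA₁] at hC₁
  rw [hA₂] at hC₂
  -- The `w1`-terms are now `w1 i` on the coalitions and one common value `≥ w1 i` on their
  -- complements. If `C₁ ∩ C₂` lost, the `w2`-maximum of `C₁` or of `C₂` would lie outside the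
  -- intersection, i.e. in the complement of the other one, and that coalition could not win.
  omega

theorem not_winning_swap_inter_of_sup_erase_lt {C₁ C₂ : Finset P} {i j : P}
    (hC₁ : Winning w1 w2 C₁) (hC₂ : Winning w1 w2 C₂) (hi₁ : i ∈ C₁) (hi₂ : i ∈ C₂)
    (hj₁ : j ∉ C₁) (hj₂ : j ∉ C₂) (hw1 : w1 i ≤ w1 j) (hw2 : w2 i ≤ w2 j)
    (h₁ : (C₁.erase i).sup w1 < w1 i) (h₂ : (C₂.erase i).sup w2 < w2 i) :
    ¬ Winning w1 w2 (insert j ((C₁ ∩ C₂).erase i)) := by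
  set S := insert j ((C₁ ∩ C₂).erase i)
  have hA₁ := Finset.sup_eq_of_sup_erase_lt hi₁ h₁
  have hB₂ := Finset.sup_eq_of_sup_erase_lt hi₂ h₂
  have hSA : S.sup w1 ≤ w1 j := by
    rw [Finset.sup_insert, max_eq_left]
    exact ((Finset.sup_mono (Finset.erase_subset_erase i Finset.inter_subset_left)).trans
      h₁.le).trans hw1
  have hSB : S.sup w2 ≤ w2 j := by
    rw [Finset.sup_insert, max_eq_left]
    exact ((Finset.sup_mono (Finset.erase_subset_erase i Finset.inter_subset_right)).trans
      h₂.le).trans hw2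
  have hA₂ : C₂.sup w1 ≤ max (C₁.sup w1) (Sᶜ.sup w1) := by
    rw [← Finset.sup_union]
    refine Finset.sup_mono fun x hx => ?_
    by_cases hx₁ : x ∈ C₁ <;> simp [S, hx, hx₁, ne_of_mem_of_not_mem hx hj₂]
  have hB₁ : C₁.sup w2 ≤ max (C₂.sup w2) (Sᶜ.sup w2) := by
    rw [← Finset.sup_union]
    refine Finset.sup_mono fun x hx => ?_
    by_cases hx₂ : x ∈ C₂ <;> simp [S, hx, hx₂, ne_of_mem_of_not_mem hx hj₁]
  have hjA₁ : w1 j ≤ C₁ᶜ.sup w1 := Finset.le_sup (Finset.mem_compl.2 hj₁)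
  have hjB₁ : w2 j ≤ C₁ᶜ.sup w2 := Finset.le_sup (Finset.mem_compl.2 hj₁)
  have hjA₂ : w1 j ≤ C₂ᶜ.sup w1 := Finset.le_sup (Finset.mem_compl.2 hj₂)
  have hjB₂ : w2 j ≤ C₂ᶜ.sup w2 := Finset.le_sup (Finset.mem_compl.2 hj₂)
  -- As `j` is in both complements, winning forces `C₁.sup w2 > w2 j` and `C₂.sup w1 > w1 j`, so
  -- these maxima lie in `Sᶜ` and `q Sᶜ ≥ C₂.sup w1 + C₁.sup w2 > w1 j + w2 j ≥ q S`.
  unfold Winning q at hC₁ hC₂ ⊢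
  omega

theorem MWC.not_winning_swap_inter {C₁ C₂ : Finset P} {i j : P} (hC₁ : MWC w1 w2 C₁)
    (hC₂ : MWC w1 w2 C₂) (hne : C₁ ≠ C₂) (hi₁ : i ∈ C₁) (hi₂ : i ∈ C₂) (hj₁ : j ∉ C₁)
    (hj₂ : j ∉ C₂) (hw1 : w1 i ≤ w1 j) (hw2 : w2 i ≤ w2 j) :
    ¬ Winning w1 w2 (insert j ((C₁ ∩ C₂).erase i)) := by
  have hK : ¬ Winning w1 w2 (C₁ ∩ C₂) := by
    refine hC₁.2 _ (Finset.ssubset_iff_subset_ne.2 ⟨Finset.inter_subset_left, fun h => ?_⟩)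
    have h₁₂ : C₁ ⊂ C₂ :=
      Finset.ssubset_iff_subset_ne.2 ⟨h ▸ Finset.inter_subset_right, hne⟩
    exact hC₂.2 _ h₁₂ hC₁.1
  have hC₁' := winning_comm.2 hC₁.1
  have hC₂' := winning_comm.2 hC₂.1
  rcases hC₁.sup_erase_lt hi₁ hj₁ hw1 hw2 with h₁ | h₁ <;>
    rcases hC₂.sup_erase_lt hi₂ hj₂ hw1 hw2 with h₂ | h₂
  · exact absurd (hC₁.1.inter_of_sup_erase_lt hC₂.1 hi₁ hi₂ hj₁ hj₂ hw1 h₁ h₂) hK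
  · exact not_winning_swap_inter_of_sup_erase_lt hC₁.1 hC₂.1 hi₁ hi₂ hj₁ hj₂ hw1 hw2 h₁ h₂
  · exact fun hS => not_winning_swap_inter_of_sup_erase_lt hC₁' hC₂' hi₁ hi₂ hj₁ hj₂ hw2 hw1
      h₁ h₂ (winning_comm.2 hS)
  · exact absurd (winning_comm.1 (hC₁'.inter_of_sup_erase_lt hC₂' hi₁ hi₂ hj₁ hj₂ hw2 h₁ h₂)) hK

theorem mem_mwcsOf {C : Finset P} {j : P} : C ∈ mwcsOf w1 w2 j ↔ MWC w1 w2 C ∧ j ∈ C := by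
  classical
  simp [mwcsOf]

theorem exists_mwc_of_mem_mwcsOf {C : Finset P} {i j : P} (hC : C ∈ mwcsOf w1 w2 i)
    (hw1 : w1 i ≤ w1 j) (hw2 : w2 i ≤ w2 j) :
    ∃ D ∈ mwcsOf w1 w2 j, D.card ≤ C.card ∧ (j ∈ C → D = C) ∧
      (j ∉ C → D ⊆ insert j (C.erase i)) := by
  obtain ⟨hCm, hi⟩ := mem_mwcsOf.1 hC
  by_cases hj : j ∈ C
  · exact ⟨C, mem_mwcsOf.2 ⟨hCm, hj⟩, le_rfl, fun _ => rfl, fun h => absurd hj h⟩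
  obtain ⟨D, hDsub, hD⟩ := (hCm.1.swap hi hj hw1 hw2).exists_mwc_subset
  have hjD : j ∈ D := by
    by_contra hjD
    have hDC : D ⊂ C :=
      ((Finset.subset_insert_iff_of_notMem hjD).1 hDsub).trans_ssubset (Finset.erase_ssubset hi)
    exact hCm.2 D hDC hD.1
  have hcard : D.card ≤ C.card := calc
    D.card ≤ (insert j (C.erase i)).card := Finset.card_le_card hDsub
    _ ≤ (C.erase i).card + 1 := Finset.card_insert_le _ _
    _ = C.card := Finset.card_erase_add_one hi
  exact ⟨D, mem_mwcsOf.2 ⟨hD, hjD⟩, hcard, fun h => absurd h hj, fun _ => hDsub⟩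

theorem exists_injOn_mwcsOf {i j : P} (hw1 : w1 i ≤ w1 j) (hw2 : w2 i ≤ w2 j) :
    ∃ Φ : Finset P → Finset P, Set.MapsTo Φ (mwcsOf w1 w2 i) (mwcsOf w1 w2 j) ∧
      Set.InjOn Φ (mwcsOf w1 w2 i) ∧ ∀ C ∈ mwcsOf w1 w2 i, (Φ C).card ≤ C.card := by
  choose! Φ hΦ hcard hfix hsub using
    fun C (hC : C ∈ mwcsOf w1 w2 i) => exists_mwc_of_mem_mwcsOf hC hw1 hw2
  have hiΦ : ∀ C ∈ mwcsOf w1 w2 i, i ∈ Φ C ↔ j ∈ C := by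
    intro C hC
    have hi := (mem_mwcsOf.1 hC).2
    by_cases hj : j ∈ C
    · simp [hfix C hC hj, hi, hj]
    · refine iff_of_false (fun hiΦ => ?_) hj
      have := hsub C hC hj hiΦ
      simp [ne_of_mem_of_not_mem hi hj] at this
  refine ⟨Φ, hΦ, fun C₁ h₁ C₂ h₂ heq => ?_, hcard⟩
  by_cases hj₁ : j ∈ C₁
  · have hj₂ : j ∈ C₂ := (hiΦ C₂ h₂).1 (heq ▸ (hiΦ C₁ h₁).2 hj₁)
    rw [← hfix C₁ h₁ hj₁, ← hfix C₂ h₂ hj₂, heq]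
  have hj₂ : j ∉ C₂ := fun hj₂ => hj₁ ((hiΦ C₁ h₁).1 (heq ▸ (hiΦ C₂ h₂).2 hj₂))
  by_contra hne
  obtain ⟨hM₁, hi₁⟩ := mem_mwcsOf.1 h₁
  obtain ⟨hM₂, hi₂⟩ := mem_mwcsOf.1 h₂
  refine hM₁.not_winning_swap_inter hM₂ hne hi₁ hi₂ hj₁ hj₂ hw1 hw2 ?_
  refine (mem_mwcsOf.1 (hΦ C₁ h₁)).1.1.mono ?_
  have hsub₂ := heq ▸ hsub C₂ h₂ hj₂
  intro x hx
  have hx₁ := hsub C₁ h₁ hj₁ hx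
  have hx₂ := hsub₂ hx
  simp only [Finset.mem_insert, Finset.mem_erase, Finset.mem_inter] at hx₁ hx₂ ⊢
  tauto

theorem hp_le_hp {i j : P} (hw1 : w1 i ≤ w1 j) (hw2 : w2 i ≤ w2 j) :
    hp w1 w2 i ≤ hp w1 w2 j := by
  obtain ⟨Φ, hmaps, hinj, -⟩ := exists_injOn_mwcsOf hw1 hw2
  exact Finset.card_le_card_of_injOn Φ hmaps hinj

theorem dp_le_dp {i j : P} (hw1 : w1 i ≤ w1 j) (hw2 : w2 i ≤ w2 j) :
    dp w1 w2 i ≤ dp w1 w2 j := by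
  obtain ⟨Φ, hmaps, hinj, hcard⟩ := exists_injOn_mwcsOf hw1 hw2
  refine Finset.sum_le_sum_of_injOn Φ hmaps hinj (fun _ _ => by positivity) fun C hC => ?_
  have hpos : 0 < (Φ C).card := Finset.card_pos.2 ⟨j, (mem_mwcsOf.1 (hmaps hC)).2⟩
  exact one_div_le_one_div_of_le (by exact_mod_cast hpos) (by exact_mod_cast hcard C hC)

end Game

/-- Local monotonicity of the Holler-Packel and Deegan-Packel indices in 2-dim C-WMMGs:
if `p_i^1 ≤ p_j^1` and `p_i^2 ≤ p_j^2` then `hp_i ≤ hp_j` and `dp_i ≤ dp_j`; in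
particular equal weight vectors give equal indices. -/
theorem hp_dp_local_monotone {P : Type*} [Fintype P] [DecidableEq P] (w1 w2 : P → ℕ) :
    (∀ i j : P, w1 i ≤ w1 j → w2 i ≤ w2 j →
      hp w1 w2 i ≤ hp w1 w2 j ∧ dp w1 w2 i ≤ dp w1 w2 j) ∧
    (∀ i j : P, w1 i = w1 j → w2 i = w2 j →
      hp w1 w2 i = hp w1 w2 j ∧ dp w1 w2 i = dp w1 w2 j) :=
  ⟨fun _ _ h1 h2 => ⟨hp_le_hp h1 h2, dp_le_dp h1 h2⟩,
    fun _ _ h1 h2 => ⟨(hp_le_hp h1.le h2.le).antisymm (hp_le_hp h1.ge h2.ge),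
      (dp_le_dp h1.le h2.le).antisymm (dp_le_dp h1.ge h2.ge)⟩⟩
end
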